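/- arXiv:0804.4447 — 2 statements merged into one kernel-verified Lean document; each statement's English description precedes it below -/
import Mathlib

section
/- If a 2×2 matrix t over R = F_p[u,u^{-1}] preserves the symplectic form σ̂, then there exists a ∈ ℤ (an integer, not merely a half-integer) such that every entry f of t satisfies f = u^{2a} f*, and det(t) = u^{2a}. -/
/-!
Write `a, b, c, d` for the entries of `t` and `E = det t`. Evaluating `σ̂` on the standard basis
gives `a* d - c* b = 1`, `a* c = c* a` and `b* d = d* b`; linear combinations of these (and of
their images under `*`) give `E f* = f` for every entry `f` and `E E* = 1`. So `E` is a unit of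
`R`, i.e. `E = λ u^k`. To see that `λ = 1` and `k` is even, map `R` to the group algebra
`F_p[ℤ/2]` by reducing exponents mod 2: this kills `*`, so `E` and `a* d - c* b` have the same
image, namely `1`.
-/

open LaurentPolynomial

/-- The `R`-valued symplectic form `σ̂(ξ,η) = ξ₊* η₋ − ξ₋* η₊` on `R²`,
where `f* = invert f` is the involution `u ↦ u⁻¹`. -/
noncomputable def sig {p : ℕ} (ξ η : LaurentPolynomial (ZMod p) × LaurentPolynomial (ZMod p)) :
    LaurentPolynomial (ZMod p) :=
  invert ξ.1 * η.2 - invert ξ.2 * η.1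

/-- Action of a 2×2 matrix over `R` on a phase space vector in `R²`. -/
noncomputable def app {p : ℕ} (t : Matrix (Fin 2) (Fin 2) (LaurentPolynomial (ZMod p)))
    (ξ : LaurentPolynomial (ZMod p) × LaurentPolynomial (ZMod p)) :
    LaurentPolynomial (ZMod p) × LaurentPolynomial (ZMod p) :=
  (t 0 0 * ξ.1 + t 0 1 * ξ.2, t 1 0 * ξ.1 + t 1 1 * ξ.2)

/-- First column of a 2×2 matrix, as a phase space vector. -/
def col1 {p : ℕ} (t : Matrix (Fin 2) (Fin 2) (LaurentPolynomial (ZMod p))) :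
    LaurentPolynomial (ZMod p) × LaurentPolynomial (ZMod p) := (t 0 0, t 1 0)

/-- Second column of a 2×2 matrix, as a phase space vector. -/
def col2 {p : ℕ} (t : Matrix (Fin 2) (Fin 2) (LaurentPolynomial (ZMod p))) :
    LaurentPolynomial (ZMod p) × LaurentPolynomial (ZMod p) := (t 0 1, t 1 1)


namespace LaurentPolynomial

variable {R : Type*}

noncomputable def parity [CommSemiring R] : R[T;T⁻¹] →+* AddMonoidAlgebra R (ZMod 2) :=
  AddMonoidAlgebra.mapDomainRingHom R (Int.castAddHom (ZMod 2))

lemma parity_C_mul_T [CommSemiring R] (c : R) (k : ℤ) :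
    parity (C c * T k) = AddMonoidAlgebra.single (k : ZMod 2) c := by
  rw [← single_eq_C_mul_T]
  exact AddMonoidAlgebra.mapDomain_single

lemma parity_T [CommSemiring R] (k : ℤ) :
    parity (T k : R[T;T⁻¹]) = AddMonoidAlgebra.single (k : ZMod 2) 1 :=
  AddMonoidAlgebra.mapDomain_single

lemma parity_invert [CommSemiring R] (f : R[T;T⁻¹]) : parity (invert f) = parity f := by
  suffices h : parity.comp (invert : R[T;T⁻¹] ≃ₐ[R] R[T;T⁻¹]).toRingHom = parity from
    RingHom.congr_fun h f
  refine AddMonoidAlgebra.ringHom_ext (fun c => ?_) (fun k => ?_)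
  · change parity (invert (C c)) = parity (C c)
    rw [invert_C]
  · change parity (invert (T k)) = parity (T k)
    rw [invert_T, parity_T, parity_T, Int.cast_neg, ZMod.neg_eq_self_mod_two]

lemma exists_eq_C_mul_T_of_isUnit [CommRing R] [IsDomain R] {f : R[T;T⁻¹]} (hf : IsUnit f) :
    ∃ (c : R) (k : ℤ), f = C c * T k := by
  obtain ⟨g, hfg⟩ := hf.exists_right_inv
  obtain ⟨n, P, hP⟩ := f.exists_T_pow
  obtain ⟨m, Q, hQ⟩ := g.exists_T_pow
  have hPQ : P * Q = Polynomial.X ^ (n + m) := by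
    apply Polynomial.toLaurent_injective
    rw [map_mul, hP, hQ, Polynomial.toLaurent_X_pow, Nat.cast_add, T_add]
    linear_combination (T (n : ℤ) * T (m : ℤ)) * hfg
  obtain ⟨i, -, u, hu⟩ := (dvd_prime_pow Polynomial.prime_X _).mp (Dvd.intro Q hPQ)
  obtain ⟨r, -, hr⟩ := Polynomial.isUnit_iff.mp u⁻¹.isUnit
  refine ⟨r, i - n, ?_⟩
  have hPr : P = Polynomial.C r * Polynomial.X ^ i := by
    rw [hr, ← hu, mul_comm, Units.mul_inv_cancel_right]
  rw [hPr, map_mul, Polynomial.toLaurent_C, Polynomial.toLaurent_X_pow] at hP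
  calc f = f * T n * T (-n) := by rw [mul_T_assoc, add_neg_cancel, T_zero, mul_one]
    _ = C r * T (i - n) := by rw [← hP, mul_assoc, ← T_add, sub_eq_add_neg]

lemma exists_eq_T_two_mul_of_parity_eq_one [CommRing R] [IsDomain R] {f : R[T;T⁻¹]}
    (hf : IsUnit f) (hpar : parity f = 1) : ∃ a : ℤ, f = T (2 * a) := by
  obtain ⟨c, k, rfl⟩ := exists_eq_C_mul_T_of_isUnit hf
  rw [parity_C_mul_T, AddMonoidAlgebra.one_def, AddMonoidAlgebra.single_inj] at hpar
  obtain ⟨hk, rfl⟩ | ⟨-, h⟩ := hpar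
  · obtain ⟨a, rfl⟩ := (ZMod.intCast_zmod_eq_zero_iff_dvd k 2).mp hk
    exact ⟨a, by simp⟩
  · exact absurd h one_ne_zero

end LaurentPolynomial

section Symplectic

variable {p : ℕ} {t : Matrix (Fin 2) (Fin 2) (LaurentPolynomial (ZMod p))}

def PreservesSig (t : Matrix (Fin 2) (Fin 2) (LaurentPolynomial (ZMod p))) : Prop :=
  ∀ ξ η : LaurentPolynomial (ZMod p) × LaurentPolynomial (ZMod p),
    sig (app t ξ) (app t η) = sig ξ η

lemma app_one_zero : app t (1, 0) = col1 t := by simp [app, col1]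

lemma app_zero_one : app t (0, 1) = col2 t := by simp [app, col2]

lemma PreservesSig.sig_col1_col2 (ht : PreservesSig t) : sig (col1 t) (col2 t) = 1 := by
  simpa [app_one_zero, app_zero_one, sig] using ht (1, 0) (0, 1)

lemma PreservesSig.sig_col1_col1 (ht : PreservesSig t) : sig (col1 t) (col1 t) = 0 := by
  simpa [app_one_zero, sig] using ht (1, 0) (1, 0)

lemma PreservesSig.sig_col2_col2 (ht : PreservesSig t) : sig (col2 t) (col2 t) = 0 := by
  simpa [app_zero_one, sig] using ht (0, 1) (0, 1)

lemma PreservesSig.det_mul_invert_apply (ht : PreservesSig t) :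
    ∀ i j, t.det * invert (t i j) = t i j := by
  have h₁₂ := ht.sig_col1_col2
  have h₁₂' := congrArg invert h₁₂
  have h₁₁ := congrArg invert ht.sig_col1_col1
  have h₂₂ := congrArg invert ht.sig_col2_col2
  simp only [sig, col1, col2, map_sub, map_mul, map_zero, map_one, involutive_invert _]
    at h₁₂ h₁₂' h₁₁ h₂₂
  simp only [Fin.forall_fin_two, Matrix.det_fin_two]
  refine ⟨⟨?_, ?_⟩, ?_, ?_⟩
  · linear_combination t 0 0 * h₁₂ + t 0 1 * h₁₁
  · linear_combination t 0 1 * h₁₂' - t 0 0 * h₂₂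
  · linear_combination t 1 0 * h₁₂ + t 1 1 * h₁₁
  · linear_combination t 1 1 * h₁₂' - t 1 0 * h₂₂

lemma PreservesSig.det_mul_invert_det (ht : PreservesSig t) : t.det * invert t.det = 1 := by
  have h := ht.sig_col1_col2
  simp only [sig, col1, col2] at h
  have hE : invert t.det =
      invert (t 0 0) * invert (t 1 1) - invert (t 0 1) * invert (t 1 0) := by
    rw [Matrix.det_fin_two, map_sub, map_mul, map_mul]
  rw [hE]
  linear_combination invert (t 0 0) * ht.det_mul_invert_apply 1 1 -
    invert (t 1 0) * ht.det_mul_invert_apply 0 1 + h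

lemma PreservesSig.parity_det (ht : PreservesSig t) : parity t.det = 1 := by
  have h := congrArg parity ht.sig_col1_col2
  simp only [sig, col1, col2, map_sub, map_mul, map_one, parity_invert] at h
  rw [Matrix.det_fin_two, map_sub, map_mul, map_mul]
  linear_combination h

end Symplectic

/-- If a 2×2 matrix over `R` preserves `σ̂`, then there is an integer lattice point
`a ∈ ℤ` such that every entry `f` of `t` satisfies `f = u^{2a} f*`, and
`det t = u^{2a}`. -/
theorem symplectic_reflection_and_det (p : ℕ) [Fact p.Prime]
    (t : Matrix (Fin 2) (Fin 2) (LaurentPolynomial (ZMod p)))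
    (hpres : ∀ ξ η : LaurentPolynomial (ZMod p) × LaurentPolynomial (ZMod p),
        sig (app t ξ) (app t η) = sig ξ η) :
    ∃ a : ℤ, (∀ i j, t i j = T (2 * a) * invert (t i j)) ∧ t.det = T (2 * a) := by
  have ht : PreservesSig t := hpres
  obtain ⟨a, ha⟩ := exists_eq_T_two_mul_of_parity_eq_one
    (IsUnit.of_mul_eq_one _ ht.det_mul_invert_det) ht.parity_det
  exact ⟨a, fun i j => by rw [← ha, ht.det_mul_invert_apply], ha⟩
end

section
/- Let ξ ∈ R² with ξ* = ξ (reflection invariant about the origin) and gcd(ξ₊, ξ₋) = 1. Then there exists η ∈ R² with η* = η, σ̂(η,η) = 0, and σ̂(η, ξ) = 1; consequently the matrix with columns (ξ, η) lies in SL₂ of the reflection-invariant subring. -/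
/-! Over a field, `R[T;T⁻¹]` is a localization of `R[X]`, hence a principal ideal domain, so
coprime `x, y` admit `a x + b y = 1`. The completion `(b, -a)` of `(x, y)` need not be fixed by
the involution `σ`, but its defect `σ(b, -a) - (b, -a)` equals `(f - σ f) • (x, y)` for
`f = a σ(b)`; as shifting by multiples of `(x, y)` keeps the determinant, `(b, -a) + f • (x, y)`
is a fixed completion. -/

open LaurentPolynomial

theorem IsLocalization.isPrincipalIdealRing {R : Type*} (S : Type*) [CommRing R] [CommRing S]
    [Algebra R S] (M : Submonoid R) [IsLocalization M S] [IsPrincipalIdealRing R] :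
    IsPrincipalIdealRing S where
  principal J := by
    obtain ⟨g, hg⟩ := (IsPrincipalIdealRing.principal (J.under R)).principal
    refine ⟨algebraMap R S g, ?_⟩
    rw [← IsLocalization.map_under M S J, hg, Ideal.submodule_span_eq, Ideal.map_span,
      Set.image_singleton, Ideal.submodule_span_eq]

instance LaurentPolynomial.isPrincipalIdealRing (K : Type*) [Field K] :
    IsPrincipalIdealRing K[T;T⁻¹] :=
  IsLocalization.isPrincipalIdealRing K[T;T⁻¹] (Submonoid.powers (Polynomial.X : Polynomial K))

theorem exists_fixed_completion_of_isCoprime {A : Type*} [CommRing A] (σ : A →+* A)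
    (hσ : Function.Involutive σ) {x y : A} (hx : σ x = x) (hy : σ y = y) (hxy : IsCoprime x y) :
    ∃ u v : A, σ u = u ∧ σ v = v ∧ u * y - x * v = 1 := by
  obtain ⟨a, b, hab⟩ := hxy
  have hab' : σ a * x + σ b * y = 1 := by
    simpa only [map_add, map_mul, map_one, hx, hy] using congrArg σ hab
  have hf : σ (a * σ b) = σ a * b := by rw [map_mul, hσ b]
  refine ⟨b + a * σ b * x, -a + a * σ b * y, ?_, ?_, ?_⟩
  · rw [map_add, map_mul, hf, hx]
    linear_combination (-σ b) * hab + b * hab'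
  · rw [map_add, map_neg, map_mul, hf, hy]
    linear_combination σ a * hab - a * hab'
  · linear_combination hab

/-- If `ξ` is reflection invariant about the origin (`ξ* = ξ`) with coprime
components, then there is a reflection-invariant `η` with `σ̂(η,η) = 0` and
`σ̂(η,ξ) = 1`; the matrix with columns `(η, ξ)` then lies in `SL₂` of the
reflection-invariant subring. -/
theorem complete_to_sca (p : ℕ) [Fact p.Prime]
    (ξ : LaurentPolynomial (ZMod p) × LaurentPolynomial (ZMod p))
    (h₁ : invert ξ.1 = ξ.1) (h₂ : invert ξ.2 = ξ.2)
    (hcop : ∀ d : LaurentPolynomial (ZMod p), d ∣ ξ.1 → d ∣ ξ.2 → IsUnit d) :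
    ∃ η : LaurentPolynomial (ZMod p) × LaurentPolynomial (ZMod p),
      invert η.1 = η.1 ∧ invert η.2 = η.2 ∧ sig η η = 0 ∧ sig η ξ = 1 ∧
      (!![η.1, ξ.1; η.2, ξ.2] : Matrix (Fin 2) (Fin 2) (LaurentPolynomial (ZMod p))).det = 1 := by
  have hξ : IsCoprime ξ.1 ξ.2 := IsRelPrime.isCoprime fun d ↦ hcop d
  obtain ⟨u, v, hu, hv, hdet⟩ := exists_fixed_completion_of_isCoprime
    (invert : LaurentPolynomial (ZMod p) ≃ₐ[ZMod p] _).toRingHom involutive_invert h₁ h₂ hξ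
  change invert u = u at hu
  change invert v = v at hv
  refine ⟨(u, v), hu, hv, ?_, ?_, ?_⟩
  · simp only [sig, hu, hv]
    ring
  · simpa only [sig, hu, hv, mul_comm ξ.1] using hdet
  · rw [Matrix.det_fin_two_of]
    linear_combination hdet
end
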